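/- Let f(x) = ½xᵀHx + xᵀv + c with H symmetric, and let C = H² + vvᵀ. If w is an eigenvector of C with eigenvalue 0, then Hw = 0 and vᵀw = 0; consequently f(x + sw) = f(x) for all x ∈ ℝ^m and all s ∈ ℝ, i.e., f is constant along directions in the null space of C. -/

import Mathlib

/-!
Expanding `wᵀ C w` with `H` symmetric gives `|Hw|² + (vᵀw)² = 0` when `Cw = 0`, so both terms
vanish. With `Hw = 0` (and hence `wᵀH = 0`) every term of `f (x + s w) - f x` carries a factor
`Hw` or `vᵀw`.
-/

open Matrix

namespace Matrix

variable {n R : Type*} [Fintype n]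

theorem dotProduct_vecMulVec_self_mulVec [CommSemiring R] (v w : n → R) :
    w ⬝ᵥ vecMulVec v v *ᵥ w = (v ⬝ᵥ w) * (v ⬝ᵥ w) := by
  rw [vecMulVec_mulVec, op_smul_eq_smul, dotProduct_smul, dotProduct_comm w v, smul_eq_mul]

theorem IsSymm.vecMul_eq_mulVec [CommSemiring R] {H : Matrix n n R} (hH : H.IsSymm)
    (w : n → R) : w ᵥ* H = H *ᵥ w := by
  rw [← vecMul_transpose, hH.eq]

theorem IsSymm.dotProduct_mul_self_mulVec [CommSemiring R] {H : Matrix n n R} (hH : H.IsSymm)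
    (w : n → R) : w ⬝ᵥ (H * H) *ᵥ w = H *ᵥ w ⬝ᵥ H *ᵥ w := by
  rw [← mulVec_mulVec, dotProduct_mulVec, hH.vecMul_eq_mulVec]

theorem IsSymm.mulVec_eq_zero_and_dotProduct_eq_zero_of_add_vecMulVec_mulVec_eq_zero
    [CommRing R] [LinearOrder R] [IsStrictOrderedRing R] {H : Matrix n n R} (hH : H.IsSymm)
    {v w : n → R} (hw : (H * H + vecMulVec v v) *ᵥ w = 0) :
    H *ᵥ w = 0 ∧ v ⬝ᵥ w = 0 := by
  have hsum : H *ᵥ w ⬝ᵥ H *ᵥ w + (v ⬝ᵥ w) * (v ⬝ᵥ w) = 0 := by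
    rw [← hH.dotProduct_mul_self_mulVec, ← dotProduct_vecMulVec_self_mulVec, ← dotProduct_add,
      ← add_mulVec, hw, dotProduct_zero]
  obtain ⟨hHw, hvw⟩ := (add_eq_zero_iff_of_nonneg
    (Finset.sum_nonneg fun i _ => mul_self_nonneg _) (mul_self_nonneg _)).mp hsum
  exact ⟨dotProduct_self_eq_zero.mp hHw, mul_self_eq_zero.mp hvw⟩

theorem IsSymm.dotProduct_mulVec_add_smul_of_mulVec_eq_zero [CommSemiring R]
    {H : Matrix n n R} (hH : H.IsSymm) {w : n → R} (hw : H *ᵥ w = 0) (x : n → R) (s : R) :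
    (x + s • w) ⬝ᵥ H *ᵥ (x + s • w) = x ⬝ᵥ H *ᵥ x := by
  rw [mulVec_add, mulVec_smul, hw, smul_zero, add_zero, add_dotProduct, smul_dotProduct,
    dotProduct_mulVec w, hH.vecMul_eq_mulVec, hw, zero_dotProduct, smul_zero, add_zero]

end Matrix

theorem stmt_15_general (m : ℕ) (H : Matrix (Fin m) (Fin m) ℝ) (hH : H.IsSymm)
    (v : Fin m → ℝ) (c : ℝ) (f : (Fin m → ℝ) → ℝ)
    (hf : ∀ x, f x = (1/2) * (x ⬝ᵥ H.mulVec x) + x ⬝ᵥ v + c)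
    (w : Fin m → ℝ)
    (hCw : (H * H + Matrix.vecMulVec v v).mulVec w = 0) :
    H.mulVec w = 0 ∧ v ⬝ᵥ w = 0 ∧ ∀ (x : Fin m → ℝ) (s : ℝ), f (x + s • w) = f x := by
  obtain ⟨hHw, hvw⟩ := hH.mulVec_eq_zero_and_dotProduct_eq_zero_of_add_vecMulVec_mulVec_eq_zero hCw
  refine ⟨hHw, hvw, fun x s => ?_⟩
  rw [hf, hf, hH.dotProduct_mulVec_add_smul_of_mulVec_eq_zero hHw, add_dotProduct,
    smul_dotProduct, dotProduct_comm w, hvw, smul_zero, add_zero]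

/-- Null-space directions of `C = H² + vvᵀ` are invariant directions of the quadratic model:
if `C w = 0` then `Hw = 0`, `vᵀw = 0`, and `f(x + s w) = f(x)` for all `x`, `s`. -/
theorem stmt_15 (m : ℕ) (H : Matrix (Fin m) (Fin m) ℝ) (hH : H.IsSymm)
    (v : Fin m → ℝ) (c : ℝ) (f : (Fin m → ℝ) → ℝ)
    (hf : ∀ x, f x = (1/2) * (x ⬝ᵥ H.mulVec x) + x ⬝ᵥ v + c)
    (w : Fin m → ℝ) (hw : w ≠ 0)
    (hCw : (H * H + Matrix.vecMulVec v v).mulVec w = 0) :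
    H.mulVec w = 0 ∧ v ⬝ᵥ w = 0 ∧ ∀ (x : Fin m → ℝ) (s : ℝ), f (x + s • w) = f x :=
  stmt_15_general m H hH v c f hf w hCw
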